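/- Let β > 0 and set b := 1/(2√(2β)). Define V̂ : ℝ → ℝ by V̂(x) = b e^{−1} for x ≤ 0, V̂(x) = b e^{(x/b)−1} for 0 < x < b, and V̂(x) = x for x ≥ b. Then: (i) V̂ is continuous on ℝ and continuously differentiable on ℝ \ {0} (in particular the left and right derivatives at x = b both equal 1, i.e. smooth fit holds at b); (ii) (1/2)V̂''(x) − √(2β)·sgn(x)·V̂'(x) = 0 for every x ∈ (−∞,0) ∪ (0,b); (iii) the one-sided derivatives at 0 satisfy V̂'(0+) − V̂'(0−) = 2√(2β)·V̂(0); (iv) V̂(x) ≥ max(x,0) for all x ∈ ℝ, with V̂(x) > x for every x < b and V̂(x) = x for every x ≥ b. -/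

import Mathlib

open MeasureTheory Set Real

/-- The candidate value function for the optimal stopping problem with a `Γ(1/2,β)` prior,
with stopping threshold `b`. -/
noncomputable def Vhat (b : ℝ) (x : ℝ) : ℝ :=
  if x ≤ 0 then b * Real.exp (-1)
  else if x < b then b * Real.exp (x / b - 1)
  else x

/-! Everything rests on the middle branch `f y = b e^{y/b - 1}`. It matches the constant
`b e^{-1}` at `0` with slope `e^{-1} = b⁻¹ f 0` there, which is the jump condition, and it is
tangent to the identity at `b`, which is smooth fit; being convex, it lies strictly above that
tangent elsewhere (`1 + t < e^t` for `t ≠ 0`). It solves `f'' = b⁻¹ f'`, which is the ODE on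
`(0, b)` because `√(2β) = (2b)⁻¹`. -/

namespace Vhat

variable {b x : ℝ}

theorem le_mul_exp_div_sub_one (hb : 0 < b) (y : ℝ) : y ≤ b * exp (y / b - 1) := by
  have h := add_one_le_exp (y / b - 1)
  calc y = b * (y / b - 1 + 1) := by field_simp; ring
    _ ≤ b * exp (y / b - 1) := by gcongr

theorem lt_mul_exp_div_sub_one (hb : 0 < b) {y : ℝ} (hy : y ≠ b) : y < b * exp (y / b - 1) := by
  have hne : y / b - 1 ≠ 0 := by
    rwa [sub_ne_zero, ne_eq, div_eq_one_iff_eq hb.ne']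
  have h := add_one_lt_exp hne
  calc y = b * (y / b - 1 + 1) := by field_simp; ring
    _ < b * exp (y / b - 1) := by gcongr

theorem hasDerivAt_exp_div_sub_one (x : ℝ) :
    HasDerivAt (fun y => exp (y / b - 1)) (exp (x / b - 1) / b) x :=
  (((hasDerivAt_id' x).div_const b).sub_const 1).exp.congr_deriv (by ring)

theorem hasDerivAt_mul_exp_div_sub_one (hb : b ≠ 0) (x : ℝ) :
    HasDerivAt (fun y => b * exp (y / b - 1)) (exp (x / b - 1)) x :=
  (hasDerivAt_exp_div_sub_one x).const_mul b |>.congr_deriv (by field_simp)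

theorem of_nonpos (hx : x ≤ 0) : Vhat b x = b * exp (-1) := if_pos hx

theorem of_pos_of_lt (hx : 0 < x) (hxb : x < b) : Vhat b x = b * exp (x / b - 1) := by
  simp [Vhat, not_le.2 hx, hxb]

theorem of_le (hb : 0 < b) (hx : b ≤ x) : Vhat b x = x := by
  simp [Vhat, not_le.2 (hb.trans_le hx), not_lt.2 hx]

theorem of_mem_Icc (hb : 0 < b) (hx : x ∈ Icc 0 b) : Vhat b x = b * exp (x / b - 1) := by
  rcases hx.1.eq_or_lt with rfl | h0
  · simp [of_nonpos le_rfl]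
  rcases hx.2.eq_or_lt with rfl | hxb
  · simp [of_le hb le_rfl, div_self hb.ne']
  · exact of_pos_of_lt h0 hxb

theorem pos (hb : 0 < b) (x : ℝ) : 0 < Vhat b x := by
  unfold Vhat
  split_ifs <;> first | positivity | linarith

theorem self_lt_of_lt (hb : 0 < b) (hx : x < b) : x < Vhat b x := by
  rcases le_or_gt x 0 with h0 | h0
  · exact h0.trans_lt (pos hb x)
  · rw [of_pos_of_lt h0 hx]
    exact lt_mul_exp_div_sub_one hb hx.ne

theorem max_self_zero_le (hb : 0 < b) (x : ℝ) : max x 0 ≤ Vhat b x := by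
  refine max_le ?_ (pos hb x).le
  rcases lt_or_ge x b with hx | hx
  · exact (self_lt_of_lt hb hx).le
  · exact (of_le hb hx).ge

theorem eq_max (hb : 0 < b) (x : ℝ) :
    Vhat b x = max (b * exp (max 0 (min x b) / b - 1)) x := by
  rcases le_or_gt x 0 with h0 | h0
  · rw [of_nonpos h0, min_eq_left (h0.trans hb.le), max_eq_left h0, zero_div, zero_sub,
      max_eq_left (h0.trans (by positivity))]
  rcases lt_or_ge x b with hxb | hxb
  · rw [of_pos_of_lt h0 hxb, min_eq_left hxb.le, max_eq_right h0.le,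
      max_eq_left (le_mul_exp_div_sub_one hb x)]
  · rw [of_le hb hxb, min_eq_right hxb, max_eq_right hb.le, div_self hb.ne', sub_self, exp_zero,
      mul_one, max_eq_right hxb]

theorem continuous (hb : 0 < b) : Continuous (Vhat b) := by
  rw [funext (eq_max hb)]
  fun_prop

theorem hasDerivAt_of_neg (hx : x < 0) : HasDerivAt (Vhat b) 0 x :=
  (hasDerivAt_const x _).congr_of_eventuallyEq <|
    Filter.mem_of_superset (Iio_mem_nhds hx) fun _ hy => of_nonpos (le_of_lt hy)

theorem hasDerivWithinAt_Icc (hb : 0 < b) (hx : x ∈ Icc 0 b) :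
    HasDerivWithinAt (Vhat b) (exp (x / b - 1)) (Icc 0 b) x :=
  (hasDerivAt_mul_exp_div_sub_one hb.ne' x).hasDerivWithinAt.congr_of_mem
    (fun _ hy => of_mem_Icc hb hy) hx

theorem hasDerivWithinAt_Iic_self (hb : 0 < b) : HasDerivWithinAt (Vhat b) 1 (Iic b) b := by
  have h := hasDerivWithinAt_Icc hb ⟨hb.le, le_rfl⟩
  rw [div_self hb.ne', sub_self, exp_zero] at h
  exact h.mono_of_mem_nhdsWithin (Icc_mem_nhdsLE hb)

theorem hasDerivWithinAt_Ici_self (hb : 0 < b) : HasDerivWithinAt (Vhat b) 1 (Ici b) b :=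
  (hasDerivWithinAt_id b _).congr_of_mem (fun _ hy => of_le hb hy) self_mem_Ici

theorem hasDerivWithinAt_Ici_zero (hb : 0 < b) :
    HasDerivWithinAt (Vhat b) (exp (-1)) (Ici 0) 0 := by
  have h := hasDerivWithinAt_Icc hb ⟨le_rfl, hb.le⟩
  rw [zero_div, zero_sub] at h
  exact h.mono_of_mem_nhdsWithin (Icc_mem_nhdsGE hb)

theorem hasDerivWithinAt_Iic_zero : HasDerivWithinAt (Vhat b) 0 (Iic 0) 0 :=
  (hasDerivWithinAt_const 0 _ _).congr_of_mem (fun _ hy => of_nonpos hy) self_mem_Iic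

theorem hasDerivAt_of_pos (hb : 0 < b) (hx : 0 < x) :
    HasDerivAt (Vhat b) (exp (min x b / b - 1)) x := by
  rcases lt_trichotomy x b with hxb | rfl | hxb
  · rw [min_eq_left hxb.le]
    exact (hasDerivWithinAt_Icc hb ⟨hx.le, hxb.le⟩).hasDerivAt (Icc_mem_nhds hx hxb)
  · have h := (hasDerivWithinAt_Iic_self hb).union (hasDerivWithinAt_Ici_self hb)
    rw [Iic_union_Ici] at h
    simpa [div_self hb.ne'] using hasDerivWithinAt_univ.1 h
  · rw [min_eq_right hxb.le, div_self hb.ne', sub_self, exp_zero]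
    exact (hasDerivAt_id x).congr_of_eventuallyEq <|
      Filter.mem_of_superset (Ioi_mem_nhds hxb) fun _ hy => of_le hb (le_of_lt hy)

theorem deriv_eventuallyEq_of_neg (hx : x < 0) :
    deriv (Vhat b) =ᶠ[nhds x] fun _ => 0 :=
  Filter.mem_of_superset (Iio_mem_nhds hx) fun _ hy => (hasDerivAt_of_neg hy).deriv

theorem deriv_eventuallyEq_of_pos (hb : 0 < b) (hx : 0 < x) :
    deriv (Vhat b) =ᶠ[nhds x] fun y => exp (min y b / b - 1) :=
  Filter.mem_of_superset (Ioi_mem_nhds hx) fun _ hy => (hasDerivAt_of_pos hb hy).deriv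

theorem contDiffOn_compl_zero (hb : 0 < b) : ContDiffOn ℝ 1 (Vhat b) {0}ᶜ := by
  rw [show (1 : WithTop ℕ∞) = 0 + 1 from rfl,
    contDiffOn_succ_iff_deriv_of_isOpen isOpen_compl_singleton, contDiffOn_zero]
  refine ⟨fun x hx => ?_, by simp, fun x hx => ?_⟩
  all_goals rcases (Ne.lt_or_gt hx : x < 0 ∨ 0 < x) with h | h
  · exact (hasDerivAt_of_neg h).differentiableAt.differentiableWithinAt
  · exact (hasDerivAt_of_pos hb h).differentiableAt.differentiableWithinAt
  · exact (continuousAt_const.congr (deriv_eventuallyEq_of_neg h).symm).continuousWithinAt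
  · have hc : Continuous fun y => exp (min y b / b - 1) := by fun_prop
    exact (hc.continuousAt.congr (deriv_eventuallyEq_of_pos hb h).symm).continuousWithinAt

theorem ode (hb : 0 < b) (hx : x < 0 ∨ 0 < x ∧ x < b) :
    (1 / 2) * deriv (deriv (Vhat b)) x - (2 * b)⁻¹ * sign x * deriv (Vhat b) x = 0 := by
  rcases hx with hx | ⟨hx, hxb⟩
  · simp [(deriv_eventuallyEq_of_neg hx).deriv_eq, (hasDerivAt_of_neg hx).deriv]
  · have hmid : deriv (Vhat b) =ᶠ[nhds x] fun y => exp (y / b - 1) :=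
      (deriv_eventuallyEq_of_pos hb hx).trans <| Filter.mem_of_superset (Iio_mem_nhds hxb)
        fun y (hy : y < b) => congrArg (fun t => exp (t / b - 1)) (min_eq_left hy.le)
    rw [hmid.deriv_eq, (hasDerivAt_exp_div_sub_one x).deriv, hmid.self_of_nhds, sign_of_pos hx]
    field_simp
    ring

end Vhat

theorem gamma_value_function_properties (β b : ℝ) (hβ : 0 < β)
    (hb : b = 1 / (2 * Real.sqrt (2 * β))) :
    Continuous (Vhat b) ∧
    ContDiffOn ℝ 1 (Vhat b) ({(0:ℝ)}ᶜ) ∧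
    HasDerivWithinAt (Vhat b) 1 (Set.Iic b) b ∧
    HasDerivWithinAt (Vhat b) 1 (Set.Ici b) b ∧
    (∀ x : ℝ, (x < 0 ∨ (0 < x ∧ x < b)) →
      (1/2) * deriv (deriv (Vhat b)) x
        - Real.sqrt (2 * β) * Real.sign x * deriv (Vhat b) x = 0) ∧
    (∃ dplus dminus : ℝ,
      HasDerivWithinAt (Vhat b) dplus (Set.Ici 0) 0 ∧
      HasDerivWithinAt (Vhat b) dminus (Set.Iic 0) 0 ∧
      dplus - dminus = 2 * Real.sqrt (2 * β) * Vhat b 0) ∧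
    (∀ x : ℝ, max x 0 ≤ Vhat b x) ∧
    (∀ x : ℝ, x < b → x < Vhat b x) ∧
    (∀ x : ℝ, b ≤ x → Vhat b x = x) := by
  have hb₀ : 0 < b := by rw [hb]; positivity
  have hsb : sqrt (2 * β) = (2 * b)⁻¹ := by rw [hb]; field_simp
  refine ⟨Vhat.continuous hb₀, Vhat.contDiffOn_compl_zero hb₀, Vhat.hasDerivWithinAt_Iic_self hb₀,
    Vhat.hasDerivWithinAt_Ici_self hb₀, fun x hx => hsb ▸ Vhat.ode hb₀ hx,
    ⟨_, _, Vhat.hasDerivWithinAt_Ici_zero hb₀, Vhat.hasDerivWithinAt_Iic_zero, ?_⟩,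
    Vhat.max_self_zero_le hb₀, fun _ => Vhat.self_lt_of_lt hb₀, fun _ => Vhat.of_le hb₀⟩
  rw [Vhat.of_nonpos le_rfl, hsb]
  field_simp
  ring
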